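/- Let G = (V, E) be a graph with |V| = n that admits a nice tree decomposition of width τ with N nodes. Then there exist a polytope P = {x ∈ ℝ^m : Ax ≤ b, Cx = d}, where m and the total number of rows of A and C are at most c·2^(τ+1)·N for an absolute constant c, and a linear map π : ℝ^m → ℝ^V, such that π(P) equals the vertex cover polytope of G, i.e., the convex hull of the characteristic vectors χ_C ∈ {0,1}^V of all vertex covers C of G. -/

import Mathlib

/-! Common definitions: CSP instances, configurations, nice tree decompositions,
and the polytopes from Kolman–Koutecký. -/

/-- A constraint with scope `scope`; its satisfaction depends only on the
coordinates in the scope (it is a relation on the domains of the scope). -/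
structure CSPConstraint (n : ℕ) where
  scope : Finset (Fin n)
  sat : (Fin n → ℝ) → Prop
  sat_congr : ∀ z z' : Fin n → ℝ, (∀ v ∈ scope, z v = z' v) → sat z → sat z'

/-- A CSP instance: finite real domains, hard constraints and soft constraints. -/
structure CSPInstance (n : ℕ) where
  dom : Fin n → Finset ℝ
  hard : List (CSPConstraint n)
  soft : List (CSPConstraint n)

variable {n : ℕ}

/-- The list of all constraints (hard and soft). -/
def consList (Q : CSPInstance n) : List (CSPConstraint n) := Q.hard ++ Q.soft

/-- A feasible assignment: values in the domains, satisfying all hard constraints. -/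
def Feasible (Q : CSPInstance n) (z : Fin n → ℝ) : Prop :=
  (∀ v, z v ∈ Q.dom v) ∧ ∀ C ∈ Q.hard, C.sat z

-- Configurations of a set `W` of variables: partial assignments (with `none`
-- playing the role of the symbol `λ`) defined exactly on `W`.
open Classical in
noncomputable def configs (Q : CSPInstance n) (W : Finset (Fin n)) :
    Finset (Fin n → Option ℝ) :=
  (Fintype.piFinset fun v =>
      if v ∈ W then (Q.dom v).image some else ({none} : Finset (Option ℝ))).filter
    (fun K => ∀ C ∈ Q.hard, C.scope ⊆ W → C.sat (fun v => (K v).getD 0))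

/-- Restriction `K↾_W` of a configuration: coordinates outside `W` are set to `λ`. -/
def restrictCfg (K : Fin n → Option ℝ) (W : Finset (Fin n)) : Fin n → Option ℝ :=
  fun v => if v ∈ W then K v else none

/-- A (rooted) nice tree: leaves, introduce nodes, forget nodes and join nodes. -/
inductive NiceTree (n : ℕ) : Type
  | leaf (v : Fin n) : NiceTree n
  | introduce (v : Fin n) (t : NiceTree n) : NiceTree n
  | forget (v : Fin n) (t : NiceTree n) : NiceTree n
  | join (t₁ t₂ : NiceTree n) : NiceTree n

namespace NiceTree

/-- The bag of the root node of a nice tree. -/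
def bag : NiceTree n → Finset (Fin n)
  | leaf v => {v}
  | introduce v t => insert v (bag t)
  | forget v t => (bag t).erase v
  | join t₁ _ => bag t₁

/-- All vertices appearing in bags of the tree. -/
def verts : NiceTree n → Finset (Fin n)
  | leaf v => {v}
  | introduce v t => insert v (verts t)
  | forget _ t => verts t
  | join t₁ t₂ => verts t₁ ∪ verts t₂

/-- Number of nodes of the tree. -/
def size : NiceTree n → ℕ
  | leaf _ => 1
  | introduce _ t => size t + 1
  | forget _ t => size t + 1
  | join t₁ t₂ => size t₁ + size t₂ + 1

/-- Structural validity of a nice tree (in particular, the connectivity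
condition of tree decompositions: an introduced vertex does not occur below,
and vertices shared by the two subtrees of a join lie in its bag). -/
def valid : NiceTree n → Prop
  | leaf _ => True
  | introduce v t => v ∉ verts t ∧ valid t
  | forget v t => v ∈ bag t ∧ valid t
  | join t₁ t₂ => bag t₁ = bag t₂ ∧ verts t₁ ∩ verts t₂ ⊆ bag t₁ ∧ valid t₁ ∧ valid t₂

/-- `isSubtree s t`: `s` is a node (subtree) of `t`. -/
def isSubtree (s : NiceTree n) : NiceTree n → Prop
  | leaf v => s = leaf v
  | introduce v t => s = introduce v t ∨ isSubtree s t
  | forget v t => s = forget v t ∨ isSubtree s t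
  | join t₁ t₂ => s = join t₁ t₂ ∨ isSubtree s t₁ ∨ isSubtree s t₂

-- The configurations relevant to the subtree: `ℛ(a) = ⋃_{b ∈ T(a)} 𝒦(B(b))`.
open Classical in
noncomputable def relConfigs (Q : CSPInstance n) : NiceTree n → Finset (Fin n → Option ℝ)
  | leaf v => configs Q {v}
  | introduce v t => configs Q (insert v (bag t)) ∪ relConfigs Q t
  | forget v t => configs Q ((bag t).erase v) ∪ relConfigs Q t
  | join t₁ t₂ => relConfigs Q t₁ ∪ relConfigs Q t₂

end NiceTree

/-- A valid nice tree decomposition for the CSP instance `Q`: every variable is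
in some bag and every constraint scope is contained in some bag. -/
def IsNiceTreeDecompCSP (Q : CSPInstance n) (T : NiceTree n) : Prop :=
  T.valid ∧ (∀ v : Fin n, v ∈ T.verts) ∧
    ∀ C ∈ consList Q, ∃ s : NiceTree n, s.isSubtree T ∧ C.scope ⊆ s.bag

/-- A valid nice tree decomposition of a graph `G`: every vertex is in some bag
and both endpoints of every edge lie in a common bag. -/
def IsNiceTreeDecompGraph (G : SimpleGraph (Fin n)) (T : NiceTree n) : Prop :=
  T.valid ∧ (∀ v : Fin n, v ∈ T.verts) ∧
    ∀ u v : Fin n, G.Adj u v → ∃ s : NiceTree n, s.isSubtree T ∧ u ∈ s.bag ∧ v ∈ s.bag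

/-- The constraint graph of a CSP instance. -/
def constraintGraph (Q : CSPInstance n) : SimpleGraph (Fin n) where
  Adj u v := u ≠ v ∧ ∃ C ∈ consList Q, u ∈ C.scope ∧ v ∈ C.scope
  symm := by
    constructor
    rintro u v ⟨hne, C, hC, hu, hv⟩
    exact ⟨hne.symm, C, hC, hv, hu⟩
  loopless := by
    constructor
    rintro v ⟨hne, -⟩
    exact hne rfl

-- The LP constraints of `P(Q)` relevant to the subtree `t`: bag equations and
-- consistency equations at introduce and forget nodes of `t`.
def RelCons (Q : CSPInstance n) (f : (Fin n → Option ℝ) → ℝ) : NiceTree n → Prop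
  | .leaf v => ∑ K ∈ configs Q {v}, f K = 1
  | .introduce v t =>
      RelCons Q f t ∧ (∑ K ∈ configs Q (insert v t.bag), f K = 1) ∧
      ∀ K ∈ configs Q t.bag,
        ∑ K' ∈ (configs Q (insert v t.bag)).filter
            (fun K' => restrictCfg K' t.bag = K), f K' = f K
  | .forget v t =>
      RelCons Q f t ∧ (∑ K ∈ configs Q (t.bag.erase v), f K = 1) ∧
      ∀ K ∈ configs Q (t.bag.erase v),
        ∑ K' ∈ (configs Q t.bag).filter
            (fun K' => restrictCfg K' (t.bag.erase v) = K), f K' = f K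
  | .join t₁ t₂ => RelCons Q f t₁ ∧ RelCons Q f t₂

/-- All the constraints of `P(Q)` relevant to the subtree `t`, including the
bounds `0 ≤ f(K) ≤ 1` for relevant configurations. -/
def RelevantLP (Q : CSPInstance n) (t : NiceTree n) (f : (Fin n → Option ℝ) → ℝ) : Prop :=
  RelCons Q f t ∧ ∀ K ∈ t.relConfigs Q, 0 ≤ f K ∧ f K ≤ 1

/-- The polytope `P(Q) ⊆ ℝ^{𝒦_ℬ}` (coordinates outside `𝒦_ℬ` are zero). -/
def Ppoly (Q : CSPInstance n) (T : NiceTree n) : Set ((Fin n → Option ℝ) → ℝ) :=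
  {f | RelevantLP Q T f ∧ ∀ K, K ∉ T.relConfigs Q → f K = 0}

/-- Extended feasible assignments `(z, h)`. -/
def ExtAssignments (Q : CSPInstance n) :
    Set ((Fin n → ℝ) × (Fin Q.soft.length → ℝ)) :=
  {p | Feasible Q p.1 ∧ ∀ i : Fin Q.soft.length,
      ((Q.soft.get i).sat p.1 ∧ p.2 i = 1) ∨ (¬ (Q.soft.get i).sat p.1 ∧ p.2 i = 0)}

/-- `CSP(Q)`: the convex hull of all extended feasible assignments. -/
def CSPpolytope (Q : CSPInstance n) : Set ((Fin n → ℝ) × (Fin Q.soft.length → ℝ)) :=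
  convexHull ℝ (ExtAssignments Q)

/-- `CSP'(Q)`: the convex hull of all feasible assignments. -/
def CSPpolytope' (Q : CSPInstance n) : Set (Fin n → ℝ) :=
  convexHull ℝ {z | Feasible Q z}

/-- The `y`-variables of the basic LP: one for each `v ∈ V` and `i ∈ D_v`. -/
abbrev YType (Q : CSPInstance n) := (v : Fin n) → {i : ℝ // i ∈ Q.dom v} → ℝ

/-- The `g`-variables of the basic LP: one for each constraint `C_U ∈ 𝒞 ∪ ℋ`
and each configuration `K ∈ 𝒦(U)`. -/
abbrev GType (Q : CSPInstance n) :=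
  (c : Fin (consList Q).length) →
    {K : Fin n → Option ℝ // K ∈ configs Q ((consList Q).get c).scope} → ℝ

/-- The basic LP (1)–(3). -/
def BasicLP (Q : CSPInstance n) (p : YType Q × GType Q) : Prop :=
  (∀ v : Fin n, ∑ i ∈ (Q.dom v).attach, p.1 v i = 1) ∧
  (∀ c : Fin (consList Q).length, ∀ v ∈ ((consList Q).get c).scope,
    ∀ (i : ℝ) (hi : i ∈ Q.dom v),
      ∑ K ∈ (configs Q ((consList Q).get c).scope).attach.filter
          (fun K => K.1 v = some i), p.2 c K = p.1 v ⟨i, hi⟩) ∧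
  (∀ v i, 0 ≤ p.1 v i ∧ p.1 v i ≤ 1) ∧ (∀ c K, 0 ≤ p.2 c K ∧ p.2 c K ≤ 1)

/-- Integrality (all coordinates in `{0,1}`) of a `(y, g)` vector. -/
def IntegralYG (Q : CSPInstance n) (p : YType Q × GType Q) : Prop :=
  (∀ v i, p.1 v i = 0 ∨ p.1 v i = 1) ∧ ∀ c K, p.2 c K = 0 ∨ p.2 c K = 1

-- The map sending a (feasible) assignment `z` to the `(y, g)` vector of the basic LP.
open Classical in
noncomputable def exMap (Q : CSPInstance n) (z : Fin n → ℝ) : YType Q × GType Q :=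
  (fun v i => if z v = i.1 then 1 else 0,
   fun c K => if ∀ u ∈ ((consList Q).get c).scope, K.1 u = some (z u) then 1 else 0)

/-!
A point of the extended formulation assigns to every bag `B` and every subset `A ⊆ B` covering
the edges inside `B` a weight `x (B, A)`, read as the probability that a random vertex cover meets
`B` in `A`. The constraints say that these weights are nonnegative, have total mass one at the
root bag, and are consistent (one is the marginal of the other) across every introduce and forget
node; the marginals of a vertex cover satisfy them. Conversely, going up the tree, a feasible point
is the family of marginals of a single probability distribution on vertex sets: at introduce and
join nodes the two distributions built so far live on vertex sets that meet only inside the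
current bag and have the same marginal there, so they glue by making them conditionally
independent given that bag. Every set in the support covers all edges, since every edge lies in a
bag, and the projection, the probability of containing each vertex, is then a convex combination
of vertex cover vectors.
-/

open Finset

section Pushforward

variable {β β' γ : Type*} [Fintype β] [DecidableEq γ]

def pushforward (f : β → γ) (w : β → ℝ) (c : γ) : ℝ := ∑ b with f b = c, w b

lemma pushforward_nonneg {f : β → γ} {w : β → ℝ} (hw : 0 ≤ w) : 0 ≤ pushforward f w :=
  fun _ => sum_nonneg fun b _ => hw b

lemma le_pushforward {f : β → γ} {w : β → ℝ} (hw : 0 ≤ w) (b : β) :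
    w b ≤ pushforward f w (f b) :=
  single_le_sum (fun b _ => hw b) (mem_filter.2 ⟨mem_univ b, rfl⟩)

lemma sum_mul_pushforward [Fintype γ] (f : β → γ) (w : β → ℝ) (g : γ → ℝ) :
    ∑ c, g c * pushforward f w c = ∑ b, g (f b) * w b := by
  simp only [pushforward, mul_sum]
  rw [← sum_fiberwise univ f]
  refine sum_congr rfl fun c _ => sum_congr rfl fun b hb => ?_
  rw [(mem_filter.1 hb).2]

lemma sum_pushforward [Fintype γ] (f : β → γ) (w : β → ℝ) :
    ∑ c, pushforward f w c = ∑ b, w b := by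
  simpa using sum_mul_pushforward f w 1

lemma pushforward_pushforward [Fintype γ] {δ : Type*} [DecidableEq δ] (f : β → γ) (g : γ → δ)
    (w : β → ℝ) : pushforward g (pushforward f w) = pushforward (g ∘ f) w := by
  ext d
  have := sum_mul_pushforward f w fun c => if g c = d then 1 else 0
  simp only [boole_mul, ← sum_filter] at this
  exact this

lemma pushforward_congr {f f' : β → γ} {w : β → ℝ} (h : ∀ b, w b ≠ 0 → f b = f' b) :
    pushforward f w = pushforward f' w := by
  ext c
  simp only [pushforward, sum_filter]
  refine sum_congr rfl fun b _ => ?_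
  by_cases hb : w b = 0
  · simp [hb]
  · rw [h b hb]

lemma exists_of_pushforward_ne_zero {f : β → γ} {w : β → ℝ} {c : γ}
    (h : pushforward f w c ≠ 0) : ∃ b, w b ≠ 0 ∧ f b = c := by
  obtain ⟨b, hb, hwb⟩ := exists_ne_zero_of_sum_ne_zero h
  exact ⟨b, hwb, (mem_filter.1 hb).2⟩

lemma pushforward_id (w : β → ℝ) [DecidableEq β] : pushforward id w = w := by
  ext b
  simp [pushforward, sum_filter]

lemma pushforward_fst_apply [Fintype β'] [DecidableEq β] (c : β × β' → ℝ) (b : β) :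
    pushforward Prod.fst c b = ∑ b', c (b, b') := by
  simp only [pushforward, sum_filter, Fintype.sum_prod_type]
  rw [Finset.sum_comm]
  simp

lemma pushforward_snd_apply [Fintype β'] [DecidableEq β'] (c : β × β' → ℝ) (b' : β') :
    pushforward Prod.snd c b' = ∑ b, c (b, b') := by
  simp [pushforward, sum_filter, Fintype.sum_prod_type]

section Coupling

variable {f : β → γ} {g : β' → γ} {w₁ : β → ℝ} {w₂ : β' → ℝ}

-- Division by zero only occurs where `w₁ p.1` already vanishes.
noncomputable def coupling (f : β → γ) (g : β' → γ) (w₁ : β → ℝ) (w₂ : β' → ℝ) (p : β × β') :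
    ℝ :=
  if f p.1 = g p.2 then w₁ p.1 * w₂ p.2 / pushforward f w₁ (f p.1) else 0

lemma coupling_nonneg (hw₁ : 0 ≤ w₁) (hw₂ : 0 ≤ w₂) : 0 ≤ coupling f g w₁ w₂ := fun p => by
  unfold coupling
  split_ifs
  · exact div_nonneg (mul_nonneg (hw₁ _) (hw₂ _)) (pushforward_nonneg hw₁ _)
  · exact le_rfl

lemma coupling_ne_zero {p : β × β'} (h : coupling f g w₁ w₂ p ≠ 0) :
    f p.1 = g p.2 ∧ w₁ p.1 ≠ 0 ∧ w₂ p.2 ≠ 0 := by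
  unfold coupling at h
  split_ifs at h with hfg
  · exact ⟨hfg, mul_ne_zero_iff.1 (div_ne_zero_iff.1 h).1⟩
  · exact absurd rfl h

lemma pushforward_fst_coupling [Fintype β'] [DecidableEq β] (hw₁ : 0 ≤ w₁)
    (h : pushforward f w₁ = pushforward g w₂) :
    pushforward Prod.fst (coupling f g w₁ w₂) = w₁ := by
  ext b
  have hsum : ∑ b', coupling f g w₁ w₂ (b, b')
      = w₁ b / pushforward f w₁ (f b) * ∑ b' with g b' = f b, w₂ b' := by
    rw [mul_sum, sum_filter]
    refine sum_congr rfl fun b' _ => ?_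
    by_cases hb : f b = g b'
    · simp [coupling, hb, mul_div_right_comm]
    · simp [coupling, hb, Ne.symm hb]
  rw [pushforward_fst_apply, hsum, ← pushforward, ← h]
  exact div_mul_cancel_of_imp fun h0 => le_antisymm (h0 ▸ le_pushforward hw₁ b) (hw₁ b)

lemma pushforward_snd_coupling [Fintype β'] [DecidableEq β'] (hw₂ : 0 ≤ w₂)
    (h : pushforward f w₁ = pushforward g w₂) :
    pushforward Prod.snd (coupling f g w₁ w₂) = w₂ := by
  ext b'
  have hsum : ∑ b, coupling f g w₁ w₂ (b, b')
      = w₂ b' / pushforward f w₁ (g b') * ∑ b : β with f b = g b', w₁ b := by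
    rw [mul_sum, sum_filter]
    refine sum_congr rfl fun b _ => ?_
    by_cases hb : f b = g b'
    · simp only [coupling, hb, if_true]
      ring
    · simp [coupling, hb]
  rw [pushforward_snd_apply, hsum, ← pushforward, h]
  exact div_mul_cancel_of_imp fun h0 => le_antisymm (h0 ▸ le_pushforward hw₂ b') (hw₂ b')

end Coupling

end Pushforward

lemma union_inter_eq_left_of_inter_eq {α : Type*} [DecidableEq α] {S₁ S₂ V₁ V₂ : Finset α}
    (h₁ : S₁ ⊆ V₁) (h₂ : S₂ ⊆ V₂) (h : S₁ ∩ (V₁ ∩ V₂) = S₂ ∩ (V₁ ∩ V₂)) :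
    (S₁ ∪ S₂) ∩ V₁ = S₁ := by
  ext x
  have hx := congrArg (x ∈ ·) h
  simp only [mem_inter, mem_union, eq_iff_iff] at hx ⊢
  have := @h₁ x
  have := @h₂ x
  tauto

section Marginal

variable {α : Type*} [Fintype α] [DecidableEq α] {w w₁ w₂ : Finset α → ℝ} {A B B' : Finset α}

def marginal (w : Finset α → ℝ) (B : Finset α) : Finset α → ℝ := pushforward (· ∩ B) w

lemma marginal_nonneg (hw : 0 ≤ w) (B : Finset α) : 0 ≤ marginal w B :=
  pushforward_nonneg hw

lemma marginal_marginal (h : B ⊆ B') : marginal (marginal w B') B = marginal w B := by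
  rw [marginal, marginal, pushforward_pushforward]
  congr 1
  funext S
  simp [inter_assoc, inter_eq_right.2 h]

lemma subset_of_marginal_ne_zero (h : marginal w B A ≠ 0) : A ⊆ B := by
  obtain ⟨S, -, rfl⟩ := exists_of_pushforward_ne_zero h
  exact inter_subset_right

lemma marginal_eq_self (h : ∀ S, w S ≠ 0 → S ⊆ B) : marginal w B = w := by
  rw [marginal, pushforward_congr (f := (· ∩ B)) (f' := id) fun S hS => inter_eq_left.2 (h S hS),
    pushforward_id]

theorem exists_glue_of_marginal_eq {V₁ V₂ : Finset α} (hw₁ : 0 ≤ w₁) (hw₂ : 0 ≤ w₂)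
    (hV₁ : ∀ S, w₁ S ≠ 0 → S ⊆ V₁) (hV₂ : ∀ S, w₂ S ≠ 0 → S ⊆ V₂) (hB : V₁ ∩ V₂ ⊆ B)
    (h : marginal w₁ B = marginal w₂ B) :
    ∃ w, 0 ≤ w ∧ (∀ S, w S ≠ 0 → S ⊆ V₁ ∪ V₂) ∧ marginal w V₁ = w₁ ∧ marginal w V₂ = w₂ := by
  have hC : marginal w₁ (V₁ ∩ V₂) = marginal w₂ (V₁ ∩ V₂) := by
    rw [← marginal_marginal hB, h, marginal_marginal hB]
  set c := coupling (· ∩ (V₁ ∩ V₂)) (· ∩ (V₁ ∩ V₂)) w₁ w₂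
  have hc : ∀ p, c p ≠ 0 → p.1 ⊆ V₁ ∧ p.2 ⊆ V₂ ∧ p.1 ∩ (V₁ ∩ V₂) = p.2 ∩ (V₁ ∩ V₂) := by
    intro p hp
    obtain ⟨h12, h1, h2⟩ := coupling_ne_zero hp
    exact ⟨hV₁ _ h1, hV₂ _ h2, h12⟩
  refine ⟨pushforward (fun p => p.1 ∪ p.2) c, pushforward_nonneg (coupling_nonneg hw₁ hw₂),
    fun S hS => ?_, ?_, ?_⟩
  · obtain ⟨p, hp, rfl⟩ := exists_of_pushforward_ne_zero hS
    exact union_subset_union (hc p hp).1 (hc p hp).2.1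
  · rw [marginal, pushforward_pushforward, pushforward_congr (f' := Prod.fst),
      pushforward_fst_coupling hw₁ hC]
    intro p hp
    obtain ⟨h1, h2, h12⟩ := hc p hp
    exact union_inter_eq_left_of_inter_eq h1 h2 h12
  · rw [marginal, pushforward_pushforward, pushforward_congr (f' := Prod.snd),
      pushforward_snd_coupling hw₂ hC]
    intro p hp
    obtain ⟨h1, h2, h12⟩ := hc p hp
    rw [Function.comp_apply, union_comm]
    exact union_inter_eq_left_of_inter_eq h2 h1 (by rw [inter_comm V₂ V₁]; exact h12.symm)

end Marginal

lemma LinearMap.toMatrix'_submatrix_mulVec {ι ι' K K' : Type*} [Fintype ι] [Fintype ι']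
    [DecidableEq ι] [Fintype K] (F : (ι → ℝ) →ₗ[ℝ] K → ℝ) (eK : K ≃ K') (e : ι ≃ ι')
    (x : ι' → ℝ) :
    ((LinearMap.toMatrix' F).submatrix eK.symm e.symm).mulVec x = F (x ∘ e) ∘ eK.symm := by
  rw [Matrix.submatrix_mulVec_equiv, LinearMap.toMatrix'_mulVec, Equiv.symm_symm]

theorem exists_matrix_image_eq {ι R S E : Type*} [Fintype ι] [DecidableEq ι] [Fintype R]
    [Fintype S] [AddCommGroup E] [Module ℝ E] (L : (ι → ℝ) →ₗ[ℝ] R → ℝ) (b : R → ℝ)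
    (M : (ι → ℝ) →ₗ[ℝ] S → ℝ) (d : S → ℝ) (π : (ι → ℝ) →ₗ[ℝ] E) :
    ∃ (A : Matrix (Fin (Fintype.card R)) (Fin (Fintype.card ι)) ℝ) (b' : Fin (Fintype.card R) → ℝ)
      (C : Matrix (Fin (Fintype.card S)) (Fin (Fintype.card ι)) ℝ) (d' : Fin (Fintype.card S) → ℝ)
      (π' : (Fin (Fintype.card ι) → ℝ) →ₗ[ℝ] E),
      π' '' {x | A.mulVec x ≤ b' ∧ C.mulVec x = d'} = π '' {x | L x ≤ b ∧ M x = d} := by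
  set e := Fintype.equivFin ι
  set eR := Fintype.equivFin R
  set eS := Fintype.equivFin S
  set φ := LinearEquiv.funCongrLeft ℝ ℝ e
  refine ⟨(LinearMap.toMatrix' L).submatrix eR.symm e.symm, b ∘ eR.symm,
    (LinearMap.toMatrix' M).submatrix eS.symm e.symm, d ∘ eS.symm, π ∘ₗ φ.toLinearMap, ?_⟩
  have hP : {x | ((LinearMap.toMatrix' L).submatrix eR.symm e.symm).mulVec x ≤ b ∘ eR.symm ∧
      ((LinearMap.toMatrix' M).submatrix eS.symm e.symm).mulVec x = d ∘ eS.symm}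
      = φ ⁻¹' {y | L y ≤ b ∧ M y = d} := by
    ext x
    simp only [LinearMap.toMatrix'_submatrix_mulVec, eS.symm.surjective.right_cancellable]
    change _ ↔ L (x ∘ e) ≤ b ∧ M (x ∘ e) = d
    exact and_congr_left' ⟨fun h r => by simpa using h (eR r), fun h r => h _⟩
  rw [hP, LinearMap.coe_comp, Set.image_comp, LinearEquiv.coe_coe,
    Set.image_preimage_eq _ φ.surjective]

namespace NiceTree

def bags : NiceTree n → Finset (Finset (Fin n))
  | leaf v => {{v}}
  | introduce v t => insert (insert v t.bag) t.bags
  | forget v t => insert (t.bag.erase v) t.bags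
  | join t₁ t₂ => t₁.bags ∪ t₂.bags

-- The pairs (larger bag, smaller bag) at introduce and forget nodes; a join node carries the bag
-- of both of its children and so needs no link.
def links : NiceTree n → Finset (Finset (Fin n) × Finset (Fin n))
  | leaf _ => ∅
  | introduce v t => insert (insert v t.bag, t.bag) t.links
  | forget v t => insert (t.bag, t.bag.erase v) t.links
  | join t₁ t₂ => t₁.links ∪ t₂.links

lemma isSubtree_refl : ∀ t : NiceTree n, t.isSubtree t
  | leaf _ => rfl
  | introduce _ _ | forget _ _ | join _ _ => Or.inl rfl

lemma mem_bags_iff {t : NiceTree n} {B : Finset (Fin n)} :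
    B ∈ t.bags ↔ ∃ s : NiceTree n, s.isSubtree t ∧ s.bag = B := by
  induction t generalizing B with
  | leaf v => simp [bags, isSubtree, bag, eq_comm]
  | introduce v t ih => simp [bags, isSubtree, ih, or_and_right, exists_or, bag, eq_comm]
  | forget v t ih => simp [bags, isSubtree, ih, or_and_right, exists_or, bag, eq_comm]
  | join t₁ t₂ ih₁ ih₂ =>
    simp only [bags, isSubtree, mem_union, ih₁, ih₂, or_and_right, exists_or, exists_eq_left, bag]
    refine ⟨Or.inr, ?_⟩
    rintro (rfl | h)
    exacts [Or.inl ⟨t₁, isSubtree_refl t₁, rfl⟩, h]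

lemma bag_mem_bags (t : NiceTree n) : t.bag ∈ t.bags :=
  mem_bags_iff.2 ⟨t, isSubtree_refl t, rfl⟩

lemma subset_verts_of_mem_bags {t : NiceTree n} {B : Finset (Fin n)} (hB : B ∈ t.bags) :
    B ⊆ t.verts := by
  induction t generalizing B with
  | leaf v => simp_all [bags, verts]
  | introduce v t ih =>
    rcases mem_insert.1 hB with rfl | hB
    exacts [insert_subset_insert _ (ih (bag_mem_bags t)), (ih hB).trans (subset_insert _ _)]
  | forget v t ih =>
    rcases mem_insert.1 hB with rfl | hB
    exacts [(erase_subset _ _).trans (ih (bag_mem_bags t)), ih hB]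
  | join t₁ t₂ ih₁ ih₂ =>
    rcases mem_union.1 hB with hB | hB
    exacts [(ih₁ hB).trans subset_union_left, (ih₂ hB).trans subset_union_right]

lemma exists_mem_bags_of_mem_verts {t : NiceTree n} {v : Fin n} (hv : v ∈ t.verts) :
    ∃ B ∈ t.bags, v ∈ B := by
  induction t with
  | leaf u => exact ⟨{u}, mem_singleton_self _, hv⟩
  | introduce u t ih =>
    rcases mem_insert.1 hv with rfl | hv
    · exact ⟨_, mem_insert_self _ _, mem_insert_self _ _⟩
    · obtain ⟨B, hB, hvB⟩ := ih hv
      exact ⟨B, mem_insert_of_mem hB, hvB⟩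
  | forget u t ih =>
    obtain ⟨B, hB, hvB⟩ := ih hv
    exact ⟨B, mem_insert_of_mem hB, hvB⟩
  | join t₁ t₂ ih₁ ih₂ =>
    rcases mem_union.1 hv with hv | hv
    · obtain ⟨B, hB, hvB⟩ := ih₁ hv
      exact ⟨B, mem_union_left _ hB, hvB⟩
    · obtain ⟨B, hB, hvB⟩ := ih₂ hv
      exact ⟨B, mem_union_right _ hB, hvB⟩

lemma mem_links {t : NiceTree n} {e : Finset (Fin n) × Finset (Fin n)} (he : e ∈ t.links) :
    e.1 ∈ t.bags ∧ e.2 ∈ t.bags ∧ e.2 ⊆ e.1 := by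
  induction t with
  | leaf v => simp [links] at he
  | introduce v t ih =>
    rcases mem_insert.1 he with rfl | he
    · exact ⟨mem_insert_self _ _, mem_insert_of_mem (bag_mem_bags t), subset_insert _ _⟩
    · obtain ⟨h1, h2, h3⟩ := ih he
      exact ⟨mem_insert_of_mem h1, mem_insert_of_mem h2, h3⟩
  | forget v t ih =>
    rcases mem_insert.1 he with rfl | he
    · exact ⟨mem_insert_of_mem (bag_mem_bags t), mem_insert_self _ _, erase_subset _ _⟩
    · obtain ⟨h1, h2, h3⟩ := ih he
      exact ⟨mem_insert_of_mem h1, mem_insert_of_mem h2, h3⟩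
  | join t₁ t₂ ih₁ ih₂ =>
    rcases mem_union.1 he with he | he
    · obtain ⟨h1, h2, h3⟩ := ih₁ he
      exact ⟨mem_union_left _ h1, mem_union_left _ h2, h3⟩
    · obtain ⟨h1, h2, h3⟩ := ih₂ he
      exact ⟨mem_union_right _ h1, mem_union_right _ h2, h3⟩

lemma size_pos (t : NiceTree n) : 0 < t.size := by
  cases t <;> simp [size]

lemma card_bags_le (t : NiceTree n) : t.bags.card ≤ t.size := by
  induction t with
  | leaf v => simp [bags, size]
  | introduce v t ih | forget v t ih => exact (card_insert_le _ _).trans (by simp [size, ih])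
  | join t₁ t₂ ih₁ ih₂ => exact (card_union_le _ _).trans (by simp only [size]; omega)

lemma card_links_le (t : NiceTree n) : t.links.card ≤ t.size := by
  induction t with
  | leaf v => simp [links]
  | introduce v t ih | forget v t ih => exact (card_insert_le _ _).trans (by simp [size, ih])
  | join t₁ t₂ ih₁ ih₂ => exact (card_union_le _ _).trans (by simp only [size]; omega)

theorem exists_marginals_of_links {t : NiceTree n} (ht : t.valid)
    {μ : Finset (Fin n) → Finset (Fin n) → ℝ} (hμ : ∀ B, 0 ≤ μ B)
    (hμB : ∀ B A, μ B A ≠ 0 → A ⊆ B) (hlinks : ∀ e ∈ t.links, marginal (μ e.1) e.2 = μ e.2) :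
    ∃ w : Finset (Fin n) → ℝ, 0 ≤ w ∧ (∀ S, w S ≠ 0 → S ⊆ t.verts) ∧
      ∀ B ∈ t.bags, marginal w B = μ B := by
  induction t with
  | leaf v =>
    refine ⟨μ {v}, hμ _, hμB _, fun B hB => ?_⟩
    rw [mem_singleton.1 hB]
    exact marginal_eq_self (hμB _)
  | introduce v t ih =>
    obtain ⟨hv, ht⟩ := ht
    obtain ⟨w₁, hw₁, hV₁, hm₁⟩ := ih ht fun e he => hlinks e (mem_insert_of_mem he)
    have hsep : t.verts ∩ insert v t.bag ⊆ t.bag := by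
      intro x hx
      obtain ⟨hxV, hx⟩ := mem_inter.1 hx
      exact (mem_insert.1 hx).resolve_left fun h => hv (h ▸ hxV)
    obtain ⟨w, hw, hV, hw₁', hw₂'⟩ := exists_glue_of_marginal_eq hw₁ (hμ _) hV₁ (hμB _) hsep
      ((hm₁ _ (bag_mem_bags t)).trans (hlinks _ (mem_insert_self _ _)).symm)
    refine ⟨w, hw, fun S hS => (hV S hS).trans ?_, fun B hB => ?_⟩
    · exact union_subset (subset_insert _ _)
        (insert_subset_insert _ (subset_verts_of_mem_bags (bag_mem_bags t)))
    · rcases mem_insert.1 hB with rfl | hB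
      · exact hw₂'
      · rw [← marginal_marginal (subset_verts_of_mem_bags hB), hw₁', hm₁ B hB]
  | forget v t ih =>
    obtain ⟨w, hw, hV, hm⟩ := ih ht.2 fun e he => hlinks e (mem_insert_of_mem he)
    refine ⟨w, hw, hV, fun B hB => ?_⟩
    rcases mem_insert.1 hB with rfl | hB
    · rw [← marginal_marginal (erase_subset v t.bag), hm _ (bag_mem_bags t)]
      exact hlinks _ (mem_insert_self _ _)
    · exact hm B hB
  | join t₁ t₂ ih₁ ih₂ =>
    obtain ⟨hbag, hsep, ht₁, ht₂⟩ := ht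
    obtain ⟨w₁, hw₁, hV₁, hm₁⟩ := ih₁ ht₁ fun e he => hlinks e (mem_union_left _ he)
    obtain ⟨w₂, hw₂, hV₂, hm₂⟩ := ih₂ ht₂ fun e he => hlinks e (mem_union_right _ he)
    obtain ⟨w, hw, hV, hw₁', hw₂'⟩ := exists_glue_of_marginal_eq hw₁ hw₂ hV₁ hV₂ hsep
      (by rw [hm₁ _ (bag_mem_bags t₁), hbag, hm₂ _ (bag_mem_bags t₂)])
    refine ⟨w, hw, hV, fun B hB => ?_⟩
    rcases mem_union.1 hB with hB | hB
    · rw [← marginal_marginal (subset_verts_of_mem_bags hB), hw₁', hm₁ B hB]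
    · rw [← marginal_marginal (subset_verts_of_mem_bags hB), hw₂', hm₂ B hB]

end NiceTree

section VertexCoverLP

open Classical in
noncomputable def bagCovers {α : Type*} (G : SimpleGraph α) (B : Finset α) : Finset (Finset α) :=
  B.powerset.filter fun A => ∀ u ∈ B, ∀ v ∈ B, G.Adj u v → u ∈ A ∨ v ∈ A

lemma mem_bagCovers {α : Type*} {G : SimpleGraph α} {A B : Finset α} :
    A ∈ bagCovers G B ↔ A ⊆ B ∧ ∀ u ∈ B, ∀ v ∈ B, G.Adj u v → u ∈ A ∨ v ∈ A := by
  simp [bagCovers]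

lemma inter_mem_bagCovers_iff {α : Type*} [DecidableEq α] {G : SimpleGraph α}
    {S B : Finset α} : S ∩ B ∈ bagCovers G B ↔ ∀ u ∈ B, ∀ v ∈ B, G.Adj u v → u ∈ S ∨ v ∈ S := by
  simp +contextual [mem_bagCovers]

variable (G : SimpleGraph (Fin n)) (T : NiceTree n)

-- Variables are indexed by bags rather than nodes: nodes with equal bags share their variables.

noncomputable def localCovers : Finset (Σ _ : Finset (Fin n), Finset (Fin n)) :=
  T.bags.sigma (bagCovers G)

noncomputable def extendLocal :
    (localCovers G T → ℝ) →ₗ[ℝ] Finset (Fin n) → Finset (Fin n) → ℝ :=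
  (LinearEquiv.piCurry ℝ fun _ _ => ℝ).toLinearMap ∘ₗ
    Function.ExtendByZero.linearMap ℝ Subtype.val

abbrev LinkRow := Option (T.links.sigma fun e => e.2.powerset)

noncomputable def lpEquations :
    (Finset (Fin n) → Finset (Fin n) → ℝ) →ₗ[ℝ] LinkRow T → ℝ where
  toFun μ
    | none => ∑ A, μ T.bag A
    | some r => marginal (μ r.1.1.1) r.1.1.2 r.1.2 - μ r.1.1.2 r.1.2
  map_add' μ ν := by
    ext (_ | r) <;> simp [marginal, pushforward, sum_add_distrib]
    ring
  map_smul' c μ := by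
    ext (_ | r) <;> simp [marginal, pushforward, mul_sum, mul_sub]

def lpRhs : LinkRow T → ℝ := fun r => r.elim 1 fun _ => 0

def lpPolytope : Set (localCovers G T → ℝ) :=
  {x | 0 ≤ x ∧ lpEquations T (extendLocal G T x) = lpRhs T}

noncomputable def bagProjection (β : Fin n → Finset (Fin n)) :
    (Finset (Fin n) → Finset (Fin n) → ℝ) →ₗ[ℝ] Fin n → ℝ where
  toFun μ u := ∑ A with u ∈ A, μ (β u) A
  map_add' μ ν := by ext u; simp [sum_add_distrib]
  map_smul' c μ := by ext u; simp [mul_sum]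

variable {G T}

lemma extendLocal_of_mem {x : localCovers G T → ℝ} {B A : Finset (Fin n)}
    (h : ⟨B, A⟩ ∈ localCovers G T) : extendLocal G T x B A = x ⟨_, h⟩ :=
  Subtype.val_injective.extend_apply x 0 ⟨_, h⟩

lemma extendLocal_of_not_mem {x : localCovers G T → ℝ} {B A : Finset (Fin n)}
    (h : ⟨B, A⟩ ∉ localCovers G T) : extendLocal G T x B A = 0 :=
  Function.extend_apply' _ _ _ fun ⟨a, ha⟩ => h (ha ▸ a.2)

lemma extendLocal_nonneg {x : localCovers G T → ℝ} (hx : 0 ≤ x) (B : Finset (Fin n)) :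
    0 ≤ extendLocal G T x B := fun A => by
  by_cases h : ⟨B, A⟩ ∈ localCovers G T
  · rw [extendLocal_of_mem h]
    exact hx _
  · rw [extendLocal_of_not_mem h]
    exact le_rfl

lemma mem_bagCovers_of_extendLocal_ne_zero {x : localCovers G T → ℝ} {B A : Finset (Fin n)}
    (h : extendLocal G T x B A ≠ 0) : A ∈ bagCovers G B := by
  by_contra hA
  exact h (extendLocal_of_not_mem fun hBA => hA (mem_sigma.1 hBA).2)

lemma subset_of_extendLocal_ne_zero {x : localCovers G T → ℝ} {B A : Finset (Fin n)}
    (h : extendLocal G T x B A ≠ 0) : A ⊆ B :=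
  (mem_bagCovers.1 (mem_bagCovers_of_extendLocal_ne_zero h)).1

lemma lpEquations_eq_lpRhs_iff {μ : Finset (Fin n) → Finset (Fin n) → ℝ}
    (hμ : ∀ B A, μ B A ≠ 0 → A ⊆ B) :
    lpEquations T μ = lpRhs T ↔
      ∑ A, μ T.bag A = 1 ∧ ∀ e ∈ T.links, marginal (μ e.1) e.2 = μ e.2 := by
  rw [funext_iff, Option.forall]
  refine and_congr Iff.rfl ?_
  simp only [lpEquations, lpRhs, LinearMap.coe_mk, AddHom.coe_mk, Option.elim, Subtype.forall,
    Sigma.forall, mem_sigma, mem_powerset, sub_eq_zero, and_imp]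
  refine ⟨fun h e he => funext fun A => ?_, fun h e A he _ => congrFun (h e he) A⟩
  by_cases hA : A ⊆ e.2
  · exact h e A he hA
  · rw [not_ne_iff.1 (mt subset_of_marginal_ne_zero hA), not_ne_iff.1 (mt (hμ _ _) hA)]

lemma bagProjection_congr {β : Fin n → Finset (Fin n)}
    {μ ν : Finset (Fin n) → Finset (Fin n) → ℝ} (h : ∀ u, μ (β u) = ν (β u)) :
    bagProjection β μ = bagProjection β ν := by
  ext u
  simp [bagProjection, h u]

lemma bagProjection_marginal {β : Fin n → Finset (Fin n)} (hβ : ∀ u, u ∈ β u)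
    (w : Finset (Fin n) → ℝ) :
    bagProjection β (marginal w) = ∑ S, w S • fun v => if v ∈ S then (1 : ℝ) else 0 := by
  ext u
  have := sum_mul_pushforward (· ∩ β u) w fun A => if u ∈ A then 1 else 0
  simp only [boole_mul, mem_inter, hβ u, and_true] at this
  simpa [bagProjection, marginal, sum_filter] using this

lemma extendLocal_marginal {w : Finset (Fin n) → ℝ} (hw : ∀ S, w S ≠ 0 → G.IsVertexCover ↑S)
    {B : Finset (Fin n)} (hB : B ∈ T.bags) :
    extendLocal G T (fun i => marginal w i.1.1 i.1.2) B = marginal w B := by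
  ext A
  by_cases h : ⟨B, A⟩ ∈ localCovers G T
  · rw [extendLocal_of_mem h]
  · rw [extendLocal_of_not_mem h, eq_comm]
    by_contra hA
    obtain ⟨S, hS, rfl⟩ := exists_of_pushforward_ne_zero hA
    exact h (mem_sigma.2 ⟨hB, inter_mem_bagCovers_iff.2 fun u _ v _ huv => hw S hS huv⟩)

lemma card_localCovers_le {k : ℕ} (h : ∀ B ∈ T.bags, B.card ≤ k) :
    (localCovers G T).card ≤ 2 ^ k * T.size := by
  rw [localCovers, card_sigma, mul_comm, ← smul_eq_mul]
  refine (sum_le_card_nsmul _ _ _ fun B hB => ?_).trans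
    (smul_le_smul_of_nonneg_right T.card_bags_le (Nat.zero_le _))
  calc (bagCovers G B).card ≤ B.powerset.card :=
        card_le_card fun A hA => mem_powerset.2 (mem_bagCovers.1 hA).1
    _ ≤ 2 ^ k := (card_powerset B).trans_le (Nat.pow_le_pow_right two_pos (h B hB))

lemma card_linkRows_le {k : ℕ} (h : ∀ B ∈ T.bags, B.card ≤ k) :
    (T.links.sigma fun e => e.2.powerset).card ≤ 2 ^ k * T.size := by
  rw [card_sigma, mul_comm, ← smul_eq_mul]
  refine (sum_le_card_nsmul _ _ _ fun e he => ?_).trans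
    (smul_le_smul_of_nonneg_right T.card_links_le (Nat.zero_le _))
  exact (card_powerset e.2).trans_le
    (Nat.pow_le_pow_right two_pos (h _ (NiceTree.mem_links he).2.1))

lemma convex_lpPolytope : Convex ℝ (lpPolytope G T) :=
  (convex_Ici 0).inter ((convex_singleton _).linear_preimage (lpEquations T ∘ₗ extendLocal G T))

lemma exists_distribution_of_mem_lpPolytope (hT : IsNiceTreeDecompGraph G T)
    {x : localCovers G T → ℝ} (hx : x ∈ lpPolytope G T) :
    ∃ w : Finset (Fin n) → ℝ, 0 ≤ w ∧ ∑ S, w S = 1 ∧ (∀ S, w S ≠ 0 → G.IsVertexCover ↑S) ∧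
      ∀ B ∈ T.bags, marginal w B = extendLocal G T x B := by
  obtain ⟨hvalid, -, hedges⟩ := hT
  obtain ⟨hnorm, hlinks⟩ :=
    (lpEquations_eq_lpRhs_iff fun _ _ => subset_of_extendLocal_ne_zero).1 hx.2
  obtain ⟨w, hw, -, hwx⟩ := T.exists_marginals_of_links hvalid (extendLocal_nonneg hx.1)
    (fun _ _ => subset_of_extendLocal_ne_zero) hlinks
  refine ⟨w, hw, ?_, fun S hS u v huv => ?_, hwx⟩
  · rw [← sum_pushforward (· ∩ T.bag), ← marginal, hwx _ T.bag_mem_bags, hnorm]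
  · obtain ⟨s, hs, hu, hv⟩ := hedges u v huv
    have hB : s.bag ∈ T.bags := NiceTree.mem_bags_iff.2 ⟨s, hs, rfl⟩
    have hpos : extendLocal G T x s.bag (S ∩ s.bag) ≠ 0 := by
      rw [← hwx _ hB]
      exact ((lt_of_le_of_ne (hw S) (Ne.symm hS)).trans_le (le_pushforward hw S)).ne'
    exact inter_mem_bagCovers_iff.1 (mem_bagCovers_of_extendLocal_ne_zero hpos) u hu v hv huv

lemma marginal_mem_lpPolytope {w : Finset (Fin n) → ℝ} (hw : 0 ≤ w) (hsum : ∑ S, w S = 1)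
    (hcov : ∀ S, w S ≠ 0 → G.IsVertexCover ↑S) :
    (fun i : localCovers G T => marginal w i.1.1 i.1.2) ∈ lpPolytope G T := by
  refine ⟨fun i => marginal_nonneg hw _ _,
    (lpEquations_eq_lpRhs_iff fun _ _ => subset_of_extendLocal_ne_zero).2 ⟨?_, fun e he => ?_⟩⟩
  · rw [extendLocal_marginal hcov T.bag_mem_bags, marginal, sum_pushforward, hsum]
  · obtain ⟨h1, h2, h12⟩ := NiceTree.mem_links he
    rw [extendLocal_marginal hcov h1, extendLocal_marginal hcov h2, marginal_marginal h12]

theorem image_lpPolytope_eq_convexHull (hT : IsNiceTreeDecompGraph G T)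
    {β : Fin n → Finset (Fin n)} (hβ : ∀ u, β u ∈ T.bags ∧ u ∈ β u) :
    (bagProjection β ∘ₗ extendLocal G T) '' lpPolytope G T =
      convexHull ℝ {x | ∃ S : Finset (Fin n), G.IsVertexCover ↑S ∧
        x = fun v => if v ∈ S then (1 : ℝ) else 0} := by
  apply Set.Subset.antisymm
  · rintro _ ⟨x, hx, rfl⟩
    obtain ⟨w, hw, hsum, hcov, hwx⟩ := exists_distribution_of_mem_lpPolytope hT hx
    rw [LinearMap.comp_apply, bagProjection_congr fun u => (hwx _ (hβ u).1).symm,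
      bagProjection_marginal fun u => (hβ u).2,
      ← sum_filter_of_ne fun S _ h => left_ne_zero_of_smul h]
    exact (convex_convexHull ℝ _).sum_mem (fun S _ => hw S) (by rwa [sum_filter_ne_zero])
      fun S hS => subset_convexHull ℝ _ ⟨S, hcov S (mem_filter.1 hS).2, rfl⟩
  · refine convexHull_min ?_ (convex_lpPolytope.linear_image _)
    rintro _ ⟨S, hS, rfl⟩
    have hδ : ∀ S', (Pi.single S 1 : Finset (Fin n) → ℝ) S' ≠ 0 → G.IsVertexCover ↑S' :=
      fun S' h => by
        obtain rfl : S' = S := by_contra fun hne => h (Pi.single_eq_of_ne hne 1)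
        exact hS
    refine ⟨_, marginal_mem_lpPolytope (Pi.single_nonneg.2 zero_le_one) (by simp) hδ, ?_⟩
    rw [LinearMap.comp_apply, bagProjection_congr fun u => extendLocal_marginal hδ (hβ u).1,
      bagProjection_marginal fun u => (hβ u).2]
    simp [Pi.single_apply, ite_smul]

end VertexCoverLP

/-- Extended formulation of size `O(2^(τ+1)·N)` for the
vertex cover polytope of a graph of treewidth `τ`. -/
theorem vertex_cover_extended_formulation :
    ∃ c : ℕ, 0 < c ∧
      ∀ (n : ℕ) (G : SimpleGraph (Fin n)) (T : NiceTree n) (τ : ℕ),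
        IsNiceTreeDecompGraph G T →
        (∀ s : NiceTree n, s.isSubtree T → s.bag.card ≤ τ + 1) →
        ∃ (m p q : ℕ) (A : Matrix (Fin p) (Fin m) ℝ) (bvec : Fin p → ℝ)
          (Cmat : Matrix (Fin q) (Fin m) ℝ) (dvec : Fin q → ℝ)
          (π : (Fin m → ℝ) →ₗ[ℝ] (Fin n → ℝ)),
          m ≤ c * 2 ^ (τ + 1) * T.size ∧ p + q ≤ c * 2 ^ (τ + 1) * T.size ∧
          π '' {x | A.mulVec x ≤ bvec ∧ Cmat.mulVec x = dvec}
            = convexHull ℝ {x : Fin n → ℝ | ∃ S : Finset (Fin n),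
                (∀ u v : Fin n, G.Adj u v → u ∈ S ∨ v ∈ S) ∧
                x = fun v => if v ∈ S then (1 : ℝ) else 0} := by
  refine ⟨3, by norm_num, fun n G T τ hT hbags => ?_⟩
  have hcard : ∀ B ∈ T.bags, B.card ≤ τ + 1 := fun B hB => by
    obtain ⟨s, hs, rfl⟩ := NiceTree.mem_bags_iff.1 hB
    exact hbags s hs
  choose β hβ using fun u => T.exists_mem_bags_of_mem_verts (hT.2.1 u)
  obtain ⟨A, b, C, d, π, hπ⟩ := exists_matrix_image_eq (-LinearMap.id) 0
    (lpEquations T ∘ₗ extendLocal G T) (lpRhs T) (bagProjection β ∘ₗ extendLocal G T)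
  have hm := card_localCovers_le (G := G) hcard
  have hq := card_linkRows_le hcard
  have hpos : 0 < 2 ^ (τ + 1) * T.size := Nat.mul_pos (Nat.two_pow_pos _) T.size_pos
  refine ⟨_, _, _, A, b, C, d, π, ?_, ?_, ?_⟩
  · rw [Fintype.card_coe, mul_assoc]
    omega
  · rw [Fintype.card_option, Fintype.card_coe, Fintype.card_coe, mul_assoc]
    omega
  · have hP : {x | (-LinearMap.id : _ →ₗ[ℝ] _) x ≤ 0 ∧
        (lpEquations T ∘ₗ extendLocal G T) x = lpRhs T} = lpPolytope G T := by
      ext x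
      simp [lpPolytope]
    rw [hπ, hP, image_lpPolytope_eq_convexHull hT hβ]
    rfl
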